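/- arXiv:2108.11382 — 9 statements merged into one kernel-verified Lean document; each statement's English description precedes it below -/
import Mathlib

section
/- The coefficients c_n of the power series H defined by H(q) = H(q^2) + q·H(q^4), H(0)=1, are all 0 or 1, and c_n = 1 if and only if the binary expansion of n contains no two consecutive 1's (the Fibbinary numbers). -/
/-- Substitution `q ↦ q^k` on formal power series: `psub k f = f(q^k)`. -/
noncomputable def psub (k : ℕ) (f : PowerSeries ℂ) : PowerSeries ℂ :=
  PowerSeries.mk fun n => if k ∣ n then PowerSeries.coeff (n / k) f else 0

private def P (n : ℕ) : Prop := ∀ i : ℕ, ¬(n.testBit i ∧ n.testBit (i + 1))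

private lemma testBit_shift (m b : ℕ) (hb : b < 2) (i : ℕ) :
    (2 * m + b).testBit (i + 1) = m.testBit i := by
  rw [Nat.testBit_add_one]
  congr 1
  omega

private lemma P_two_mul (m : ℕ) : P (2 * m) ↔ P m := by
  constructor
  · intro h i hi
    exact h (i + 1) ⟨by rw [show 2*m = 2*m+0 by ring, testBit_shift m 0 (by norm_num)]; exact hi.1,
      by rw [show 2*m = 2*m+0 by ring, testBit_shift m 0 (by norm_num)]; exact hi.2⟩
  · intro h i hi
    match i with
    | 0 => have : (2*m).testBit 0 = false := by rw [Nat.testBit_zero]; simp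
           rw [this] at hi; exact Bool.false_ne_true hi.1
    | (j+1) =>
      rw [show 2*m = 2*m+0 by ring, testBit_shift m 0 (by norm_num),
        testBit_shift m 0 (by norm_num)] at hi
      exact h j hi

private lemma P_four_mul_add_one (m : ℕ) : P (4 * m + 1) ↔ P m := by
  have e0 : (4*m+1).testBit 0 = true := by rw [Nat.testBit_zero]; simp; omega
  have e1 : (4*m+1).testBit 1 = false := by
    rw [show 4*m+1 = 2*(2*m)+1 by ring, testBit_shift (2*m) 1 (by norm_num),
      Nat.testBit_zero]; simp
  have e2 : ∀ i, (4*m+1).testBit (i+2) = m.testBit i := by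
    intro i
    rw [show 4*m+1 = 2*(2*m)+1 by ring, testBit_shift (2*m) 1 (by norm_num),
      show 2*m = 2*m+0 by ring, testBit_shift m 0 (by norm_num)]
  constructor
  · intro h i hi
    exact h (i + 2) ⟨by rw [e2]; exact hi.1, by rw [show i+2+1 = i+1+2 by ring, e2]; exact hi.2⟩
  · intro h i hi
    match i with
    | 0 => rw [e1] at hi; exact Bool.false_ne_true hi.2
    | 1 => rw [e1] at hi; exact Bool.false_ne_true hi.1
    | (j+2) =>
      rw [e2, show j+2+1 = j+1+2 by ring, e2] at hi
      exact h j hi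

private lemma not_P_four_mul_add_three (m : ℕ) : ¬ P (4 * m + 3) := by
  intro h
  apply h 0
  constructor
  · rw [Nat.testBit_zero]; simp; omega
  · rw [show 4*m+3 = 2*(2*m+1)+1 by ring, testBit_shift (2*m+1) 1 (by norm_num),
      Nat.testBit_zero]; simp

theorem stmt1 (H : PowerSeries ℂ)
    (h1 : PowerSeries.constantCoeff H = 1)
    (heq : H = psub 2 H + PowerSeries.X * psub 4 H) :
    (∀ n : ℕ, PowerSeries.coeff n H = 0 ∨ PowerSeries.coeff n H = 1) ∧
    (∀ n : ℕ, PowerSeries.coeff n H = 1 ↔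
      ∀ i : ℕ, ¬(n.testBit i ∧ n.testBit (i + 1))) := by
  have key : ∀ n : ℕ, (P n → PowerSeries.coeff n H = 1) ∧ (¬ P n → PowerSeries.coeff n H = 0) := by
    intro n
    induction n using Nat.strong_induction_on with
    | _ n ih =>
      match n, ih with
      | 0, _ =>
        have h0 : PowerSeries.coeff 0 H = 1 := by
          rw [PowerSeries.coeff_zero_eq_constantCoeff]; exact h1
        exact ⟨fun _ => h0, fun hnp => absurd (fun i hi => by
          simp [Nat.testBit, Nat.zero_shiftRight] at hi) hnp⟩
      | (k+1), ih =>
        -- compute the coefficient recurrence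
        have hrec : PowerSeries.coeff (k+1) H =
            (if 2 ∣ (k+1) then PowerSeries.coeff ((k+1)/2) H else 0) +
            (if 4 ∣ k then PowerSeries.coeff (k/4) H else 0) := by
          conv_lhs => rw [heq]
          rw [map_add, PowerSeries.coeff_succ_X_mul]
          simp only [psub, PowerSeries.coeff_mk]
        have hk4 := Nat.mod_lt (k+1) (show 0 < 4 by norm_num)
        set r := (k+1) % 4 with hr
        have hdiv : k + 1 = 4 * ((k+1)/4) + r := by rw [hr]; omega
        set m := (k+1)/4 with hm
        interval_cases r
        · -- k+1 = 4m : even, c = c_{2m}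
          have h2 : 2 ∣ (k+1) := by omega
          have h4 : ¬ 4 ∣ k := by omega
          have heval : PowerSeries.coeff (k+1) H = PowerSeries.coeff ((k+1)/2) H := by
            rw [hrec, if_pos h2, if_neg h4, add_zero]
          have hlt : (k+1)/2 < k+1 := by omega
          have hPiff : P (k+1) ↔ P ((k+1)/2) := by
            have h := P_two_mul ((k+1)/2)
            rwa [show 2*((k+1)/2) = k+1 by omega] at h
          obtain ⟨ha, hb⟩ := ih _ hlt
          exact ⟨fun hp => heval ▸ ha (hPiff.mp hp), fun hp => heval ▸ hb (hPiff.not.mp hp)⟩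
        · -- k+1 = 4m+1 : c = c_m
          have h2 : ¬ 2 ∣ (k+1) := by omega
          have h4 : 4 ∣ k := by omega
          have heval : PowerSeries.coeff (k+1) H = PowerSeries.coeff (k/4) H := by
            rw [hrec, if_neg h2, if_pos h4, zero_add]
          have hlt : k/4 < k+1 := by omega
          have hPiff : P (k+1) ↔ P (k/4) := by
            rw [show k+1 = 4*(k/4)+1 by omega]
            exact P_four_mul_add_one _
          obtain ⟨ha, hb⟩ := ih _ hlt
          exact ⟨fun hp => heval ▸ ha (hPiff.mp hp), fun hp => heval ▸ hb (hPiff.not.mp hp)⟩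
        · -- k+1 = 4m+2 : even
          have h2 : 2 ∣ (k+1) := by omega
          have h4 : ¬ 4 ∣ k := by omega
          have heval : PowerSeries.coeff (k+1) H = PowerSeries.coeff ((k+1)/2) H := by
            rw [hrec, if_pos h2, if_neg h4, add_zero]
          have hlt : (k+1)/2 < k+1 := by omega
          have hPiff : P (k+1) ↔ P ((k+1)/2) := by
            have h := P_two_mul ((k+1)/2)
            rwa [show 2*((k+1)/2) = k+1 by omega] at h
          obtain ⟨ha, hb⟩ := ih _ hlt
          exact ⟨fun hp => heval ▸ ha (hPiff.mp hp), fun hp => heval ▸ hb (hPiff.not.mp hp)⟩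
        · -- k+1 = 4m+3 : coefficient 0, ¬P
          have h2 : ¬ 2 ∣ (k+1) := by omega
          have h4 : ¬ 4 ∣ k := by omega
          have heval : PowerSeries.coeff (k+1) H = 0 := by
            rw [hrec, if_neg h2, if_neg h4, add_zero]
          have hnp : ¬ P (k+1) := by
            rw [show k+1 = 4*m+3 by omega]
            exact not_P_four_mul_add_three m
          exact ⟨fun hp => absurd hp hnp, fun _ => heval⟩
  constructor
  · intro n
    by_cases hp : P n
    · exact Or.inr ((key n).1 hp)
    · exact Or.inl ((key n).2 hp)
  · intro n
    constructor
    · intro h1n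
      by_cases hp : P n
      · exact hp
      · rw [(key n).2 hp] at h1n; exact absurd h1n one_ne_zero.symm
    · exact (key n).1
end

section
/- Let F, G be the unique pair of power series with F(0)=G(0)=1 satisfying F(q) = G(q^2) + q·F(q^4) and G(q) = q·F(q^2) + G(q^4), and let I be the power series with I(0)=1 satisfying I(q) = q·I(q^2) + I(q^4). Then I(q) = q·F(q^3) + G(q^3). -/
theorem stmt4 (F G I : PowerSeries ℂ)
    (hF0 : PowerSeries.constantCoeff F = 1)
    (hG0 : PowerSeries.constantCoeff G = 1)
    (hF : F = psub 2 G + PowerSeries.X * psub 4 F)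
    (hG : G = PowerSeries.X * psub 2 F + psub 4 G)
    (hI0 : PowerSeries.constantCoeff I = 1)
    (hI : I = PowerSeries.X * psub 2 I + psub 4 I) :
    I = PowerSeries.X * psub 3 F + psub 3 G := by
  have hpsub : ∀ (k n : ℕ) (f : PowerSeries ℂ),
      PowerSeries.coeff n (psub k f) =
        if k ∣ n then PowerSeries.coeff (n / k) f else 0 := by
    intro k n f; rw [psub, PowerSeries.coeff_mk]
  have hXS : ∀ (n : ℕ) (f : PowerSeries ℂ),
      PowerSeries.coeff (n + 1) (PowerSeries.X * f) = PowerSeries.coeff n f :=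
    fun n f => PowerSeries.coeff_succ_X_mul n f
  have hX0 : ∀ f : PowerSeries ℂ, PowerSeries.coeff 0 (PowerSeries.X * f) = 0 := by
    intro f
    simp [PowerSeries.coeff_zero_eq_constantCoeff]
  have eI : ∀ n, PowerSeries.coeff n I =
      PowerSeries.coeff n (PowerSeries.X * psub 2 I) + PowerSeries.coeff n (psub 4 I) := by
    intro n; conv_lhs => rw [hI]
    rw [map_add]
  have eF : ∀ n, PowerSeries.coeff n F =
      PowerSeries.coeff n (psub 2 G) + PowerSeries.coeff n (PowerSeries.X * psub 4 F) := by
    intro n; conv_lhs => rw [hF]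
    rw [map_add]
  have eG : ∀ n, PowerSeries.coeff n G =
      PowerSeries.coeff n (PowerSeries.X * psub 2 F) + PowerSeries.coeff n (psub 4 G) := by
    intro n; conv_lhs => rw [hG]
    rw [map_add]
  have key : ∀ n : ℕ,
      PowerSeries.coeff (3 * n) I = PowerSeries.coeff n G ∧
      PowerSeries.coeff (3 * n + 1) I = PowerSeries.coeff n F ∧
      PowerSeries.coeff (3 * n + 2) I = 0 := by
    intro n
    induction n using Nat.strong_induction_on with
    | _ n ih =>
      by_cases hn : n = 0
      · subst hn
        refine ⟨?_, ?_, ?_⟩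
        · simp [PowerSeries.coeff_zero_eq_constantCoeff, hI0, hG0]
        · rw [show 3 * 0 + 1 = 0 + 1 from rfl, eI, hXS, hpsub, hpsub,
            if_pos (show 2 ∣ 0 by omega), if_neg (show ¬ 4 ∣ 0 + 1 by omega)]
          simp [PowerSeries.coeff_zero_eq_constantCoeff, hI0, hF0]
        · rw [show 3 * 0 + 2 = 1 + 1 from rfl, eI, hXS, hpsub, hpsub,
            if_neg (show ¬ 2 ∣ 1 by omega), if_neg (show ¬ 4 ∣ 1 + 1 by omega)]
          ring
      · obtain ⟨k, rfl | rfl⟩ := Nat.even_or_odd' n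
        · -- n = 2k, k ≥ 1
          have hk : 1 ≤ k := by omega
          refine ⟨?_, ?_, ?_⟩
          · -- i(6k) = g(2k)
            obtain ⟨j, rfl | rfl⟩ := Nat.even_or_odd' k
            · -- k = 2j, j ≥ 1
              have e1 : PowerSeries.coeff (3 * (2 * (2 * j))) I
                  = PowerSeries.coeff (3 * j) I := by
                rw [show 3 * (2 * (2 * j)) = (12 * j - 1) + 1 by omega, eI, hXS,
                  hpsub, hpsub, if_neg (show ¬ 2 ∣ 12 * j - 1 by omega),
                  if_pos (show 4 ∣ 12 * j - 1 + 1 by omega),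
                  show (12 * j - 1 + 1) / 4 = 3 * j by omega]
                ring
              have e2 : PowerSeries.coeff (2 * (2 * j)) G
                  = PowerSeries.coeff j G := by
                rw [show 2 * (2 * j) = (4 * j - 1) + 1 by omega, eG, hXS,
                  hpsub, hpsub, if_neg (show ¬ 2 ∣ 4 * j - 1 by omega),
                  if_pos (show 4 ∣ 4 * j - 1 + 1 by omega),
                  show (4 * j - 1 + 1) / 4 = j by omega]
                ring
              rw [e1, e2, (ih j (by omega)).1]
            · -- k = 2j+1
              have e1 : PowerSeries.coeff (3 * (2 * (2 * j + 1))) I = 0 := by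
                rw [show 3 * (2 * (2 * j + 1)) = (12 * j + 5) + 1 by omega, eI, hXS,
                  hpsub, hpsub, if_neg (show ¬ 2 ∣ 12 * j + 5 by omega),
                  if_neg (show ¬ 4 ∣ 12 * j + 5 + 1 by omega)]
                ring
              have e2 : PowerSeries.coeff (2 * (2 * j + 1)) G = 0 := by
                rw [show 2 * (2 * j + 1) = (4 * j + 1) + 1 by omega, eG, hXS,
                  hpsub, hpsub, if_neg (show ¬ 2 ∣ 4 * j + 1 by omega),
                  if_neg (show ¬ 4 ∣ 4 * j + 1 + 1 by omega)]
                ring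
              rw [e1, e2]
          · -- i(6k+1) = f(2k)
            have e1 : PowerSeries.coeff (3 * (2 * k) + 1) I
                = PowerSeries.coeff (3 * k) I := by
              rw [show 3 * (2 * k) + 1 = (6 * k) + 1 by omega, eI, hXS,
                hpsub, hpsub, if_pos (show 2 ∣ 6 * k by omega),
                if_neg (show ¬ 4 ∣ 6 * k + 1 by omega),
                show 6 * k / 2 = 3 * k by omega]
              ring
            have e2 : PowerSeries.coeff (2 * k) F = PowerSeries.coeff k G := by
              rw [show 2 * k = (2 * k - 1) + 1 by omega, eF, hXS,
                hpsub, hpsub, if_pos (show 2 ∣ 2 * k - 1 + 1 by omega),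
                if_neg (show ¬ 4 ∣ 2 * k - 1 by omega),
                show (2 * k - 1 + 1) / 2 = k by omega]
              ring
            rw [e1, e2, (ih k (by omega)).1]
          · -- i(6k+2) = 0
            obtain ⟨j, rfl | rfl⟩ := Nat.even_or_odd' k
            · rw [show 3 * (2 * (2 * j)) + 2 = (12 * j + 1) + 1 by omega, eI, hXS,
                hpsub, hpsub, if_neg (show ¬ 2 ∣ 12 * j + 1 by omega),
                if_neg (show ¬ 4 ∣ 12 * j + 1 + 1 by omega)]
              ring
            · rw [show 3 * (2 * (2 * j + 1)) + 2 = (12 * j + 7) + 1 by omega, eI, hXS,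
                hpsub, hpsub, if_neg (show ¬ 2 ∣ 12 * j + 7 by omega),
                if_pos (show 4 ∣ 12 * j + 7 + 1 by omega),
                show (12 * j + 7 + 1) / 4 = 3 * j + 2 by omega]
              rw [(ih j (by omega)).2.2]
              ring
        · -- n = 2k + 1
          refine ⟨?_, ?_, ?_⟩
          · -- i(6k+3) = g(2k+1)
            have e1 : PowerSeries.coeff (3 * (2 * k + 1)) I
                = PowerSeries.coeff (3 * k + 1) I := by
              rw [show 3 * (2 * k + 1) = (6 * k + 2) + 1 by omega, eI, hXS,
                hpsub, hpsub, if_pos (show 2 ∣ 6 * k + 2 by omega),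
                if_neg (show ¬ 4 ∣ 6 * k + 2 + 1 by omega),
                show (6 * k + 2) / 2 = 3 * k + 1 by omega]
              ring
            have e2 : PowerSeries.coeff (2 * k + 1) G = PowerSeries.coeff k F := by
              rw [show 2 * k + 1 = (2 * k) + 1 by omega, eG, hXS,
                hpsub, hpsub, if_pos (show 2 ∣ 2 * k by omega),
                if_neg (show ¬ 4 ∣ 2 * k + 1 by omega),
                show 2 * k / 2 = k by omega]
              ring
            rw [e1, e2, (ih k (by omega)).2.1]
          · -- i(6k+4) = f(2k+1)
            obtain ⟨j, rfl | rfl⟩ := Nat.even_or_odd' k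
            · have e1 : PowerSeries.coeff (3 * (2 * (2 * j) + 1) + 1) I
                  = PowerSeries.coeff (3 * j + 1) I := by
                rw [show 3 * (2 * (2 * j) + 1) + 1 = (12 * j + 3) + 1 by omega, eI, hXS,
                  hpsub, hpsub, if_neg (show ¬ 2 ∣ 12 * j + 3 by omega),
                  if_pos (show 4 ∣ 12 * j + 3 + 1 by omega),
                  show (12 * j + 3 + 1) / 4 = 3 * j + 1 by omega]
                ring
              have e2 : PowerSeries.coeff (2 * (2 * j) + 1) F
                  = PowerSeries.coeff j F := by
                rw [show 2 * (2 * j) + 1 = (4 * j) + 1 by omega, eF, hXS,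
                  hpsub, hpsub, if_neg (show ¬ 2 ∣ 4 * j + 1 by omega),
                  if_pos (show 4 ∣ 4 * j by omega),
                  show 4 * j / 4 = j by omega]
                ring
              rw [e1, e2, (ih j (by omega)).2.1]
            · have e1 : PowerSeries.coeff (3 * (2 * (2 * j + 1) + 1) + 1) I = 0 := by
                rw [show 3 * (2 * (2 * j + 1) + 1) + 1 = (12 * j + 9) + 1 by omega, eI, hXS,
                  hpsub, hpsub, if_neg (show ¬ 2 ∣ 12 * j + 9 by omega),
                  if_neg (show ¬ 4 ∣ 12 * j + 9 + 1 by omega)]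
                ring
              have e2 : PowerSeries.coeff (2 * (2 * j + 1) + 1) F = 0 := by
                rw [show 2 * (2 * j + 1) + 1 = (4 * j + 2) + 1 by omega, eF, hXS,
                  hpsub, hpsub, if_neg (show ¬ 2 ∣ 4 * j + 3 by omega),
                  if_neg (show ¬ 4 ∣ 4 * j + 2 by omega)]
                ring
              rw [e1, e2]
          · -- i(6k+5) = 0
            rw [show 3 * (2 * k + 1) + 2 = (6 * k + 4) + 1 by omega, eI, hXS,
              hpsub, hpsub, if_pos (show 2 ∣ 6 * k + 4 by omega),
              if_neg (show ¬ 4 ∣ 6 * k + 4 + 1 by omega),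
              show (6 * k + 4) / 2 = 3 * k + 2 by omega]
            rw [(ih k (by omega)).2.2]
            ring
  ext n
  rw [map_add]
  obtain ⟨m, r, hr, rfl⟩ : ∃ m r, r < 3 ∧ n = 3 * m + r :=
    ⟨n / 3, n % 3, Nat.mod_lt _ (by norm_num), by omega⟩
  interval_cases r
  · rw [show 3 * m + 0 = 3 * m by omega]
    have hxt : PowerSeries.coeff (3 * m) (PowerSeries.X * psub 3 F) = 0 := by
      rcases Nat.eq_zero_or_pos m with rfl | hm
      · simp [PowerSeries.coeff_zero_eq_constantCoeff]
      · rw [show 3 * m = (3 * m - 1) + 1 by omega, hXS, hpsub,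
          if_neg (show ¬ 3 ∣ 3 * m - 1 by omega)]
    rw [hxt, hpsub, if_pos (show 3 ∣ 3 * m by omega), show 3 * m / 3 = m by omega,
      (key m).1]
    ring
  · rw [show 3 * m + 1 = (3 * m) + 1 by omega, hXS, hpsub, hpsub,
      if_pos (show 3 ∣ 3 * m by omega), if_neg (show ¬ 3 ∣ 3 * m + 1 by omega),
      show 3 * m / 3 = m by omega, (key m).2.1]
    ring
  · rw [show 3 * m + 2 = (3 * m + 1) + 1 by omega, hXS, hpsub, hpsub,
      if_neg (show ¬ 3 ∣ 3 * m + 1 by omega), if_neg (show ¬ 3 ∣ 3 * m + 1 + 1 by omega),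
      (key m).2.2]
    ring
end

section
/- Let F, G be the power series with F(0)=G(0)=1 satisfying F(q) = G(q^2) + q·F(q^4) and G(q) = q·F(q^2) + G(q^4). Then the coefficients a_n of F and b_n of G satisfy: a_{2n} = b_n, a_{4n+1} = a_n, a_{4n+3} = 0, b_{2n+1} = a_n, b_{4n} = b_n, b_{4n+2} = 0. In particular all coefficients of F and G are 0 or 1. -/
lemma coeff_psub (k n : ℕ) (f : PowerSeries ℂ) :
    PowerSeries.coeff n (psub k f) =
      if k ∣ n then PowerSeries.coeff (n / k) f else 0 :=
  PowerSeries.coeff_mk _ _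

lemma coeff_Xmul (n : ℕ) (f : PowerSeries ℂ) :
    PowerSeries.coeff n (PowerSeries.X * f) =
      if n = 0 then 0 else PowerSeries.coeff (n - 1) f := by
  cases n with
  | zero => simp
  | succ m => simp [PowerSeries.coeff_succ_X_mul]

theorem stmt5 (F G : PowerSeries ℂ)
    (hF0 : PowerSeries.constantCoeff F = 1)
    (hG0 : PowerSeries.constantCoeff G = 1)
    (hF : F = psub 2 G + PowerSeries.X * psub 4 F)
    (hG : G = PowerSeries.X * psub 2 F + psub 4 G) :
    (∀ n : ℕ,
      PowerSeries.coeff (2 * n) F = PowerSeries.coeff n G ∧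
      PowerSeries.coeff (4 * n + 1) F = PowerSeries.coeff n F ∧
      PowerSeries.coeff (4 * n + 3) F = 0 ∧
      PowerSeries.coeff (2 * n + 1) G = PowerSeries.coeff n F ∧
      PowerSeries.coeff (4 * n) G = PowerSeries.coeff n G ∧
      PowerSeries.coeff (4 * n + 2) G = 0) ∧
    (∀ n : ℕ, PowerSeries.coeff n F = 0 ∨ PowerSeries.coeff n F = 1) ∧
    (∀ n : ℕ, PowerSeries.coeff n G = 0 ∨ PowerSeries.coeff n G = 1) := by
  have hFn : ∀ n : ℕ, PowerSeries.coeff n F =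
      (if 2 ∣ n then PowerSeries.coeff (n / 2) G else 0) +
      (if n ≠ 0 ∧ 4 ∣ (n - 1) then PowerSeries.coeff ((n - 1) / 4) F else 0) := by
    intro n
    conv_lhs => rw [hF]
    rw [map_add, coeff_psub, coeff_Xmul]
    by_cases h0 : n = 0
    · simp [h0]
    · rw [coeff_psub]; simp [h0]
  have hGn : ∀ n : ℕ, PowerSeries.coeff n G =
      (if n ≠ 0 ∧ 2 ∣ (n - 1) then PowerSeries.coeff ((n - 1) / 2) F else 0) +
      (if 4 ∣ n then PowerSeries.coeff (n / 4) G else 0) := by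
    intro n
    conv_lhs => rw [hG]
    rw [map_add, coeff_psub, coeff_Xmul]
    by_cases h0 : n = 0
    · simp [h0]
    · rw [coeff_psub]; simp [h0]
  have e1 : ∀ n : ℕ, PowerSeries.coeff (2 * n) F = PowerSeries.coeff n G := by
    intro n
    rw [hFn (2 * n)]
    have h1 : 2 ∣ 2 * n := ⟨n, rfl⟩
    have h2 : ¬ (2 * n ≠ 0 ∧ 4 ∣ (2 * n - 1)) := by
      rintro ⟨hne, hd⟩; omega
    rw [if_pos h1, if_neg h2]
    simp [Nat.mul_div_cancel_left n (by norm_num : 0 < 2)]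
  have e2 : ∀ n : ℕ, PowerSeries.coeff (4 * n + 1) F = PowerSeries.coeff n F := by
    intro n
    rw [hFn (4 * n + 1)]
    have h1 : ¬ 2 ∣ 4 * n + 1 := by omega
    have h2 : (4 * n + 1 ≠ 0 ∧ 4 ∣ (4 * n + 1 - 1)) := ⟨by omega, by omega⟩
    rw [if_neg h1, if_pos h2]
    have : (4 * n + 1 - 1) / 4 = n := by omega
    rw [this]; ring
  have e3 : ∀ n : ℕ, PowerSeries.coeff (4 * n + 3) F = 0 := by
    intro n
    rw [hFn (4 * n + 3)]
    have h1 : ¬ 2 ∣ 4 * n + 3 := by omega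
    have h2 : ¬ (4 * n + 3 ≠ 0 ∧ 4 ∣ (4 * n + 3 - 1)) := by rintro ⟨_, hd⟩; omega
    rw [if_neg h1, if_neg h2]; ring
  have e4 : ∀ n : ℕ, PowerSeries.coeff (2 * n + 1) G = PowerSeries.coeff n F := by
    intro n
    rw [hGn (2 * n + 1)]
    have h1 : (2 * n + 1 ≠ 0 ∧ 2 ∣ (2 * n + 1 - 1)) := ⟨by omega, by omega⟩
    have h2 : ¬ 4 ∣ 2 * n + 1 := by omega
    rw [if_pos h1, if_neg h2]
    have : (2 * n + 1 - 1) / 2 = n := by omega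
    rw [this]; ring
  have e5 : ∀ n : ℕ, PowerSeries.coeff (4 * n) G = PowerSeries.coeff n G := by
    intro n
    rw [hGn (4 * n)]
    have h1 : ¬ (4 * n ≠ 0 ∧ 2 ∣ (4 * n - 1)) := by rintro ⟨hne, hd⟩; omega
    have h2 : 4 ∣ 4 * n := ⟨n, rfl⟩
    rw [if_neg h1, if_pos h2]
    have : 4 * n / 4 = n := by omega
    rw [this]; ring
  have e6 : ∀ n : ℕ, PowerSeries.coeff (4 * n + 2) G = 0 := by
    intro n
    rw [hGn (4 * n + 2)]
    have h1 : ¬ (4 * n + 2 ≠ 0 ∧ 2 ∣ (4 * n + 2 - 1)) := by rintro ⟨_, hd⟩; omega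
    have h2 : ¬ 4 ∣ 4 * n + 2 := by omega
    rw [if_neg h1, if_neg h2]; ring
  have a0 : PowerSeries.coeff 0 F = 1 := by
    rw [PowerSeries.coeff_zero_eq_constantCoeff, hF0]
  have b0 : PowerSeries.coeff 0 G = 1 := by
    rw [PowerSeries.coeff_zero_eq_constantCoeff, hG0]
  have key : ∀ n : ℕ,
      (PowerSeries.coeff n F = 0 ∨ PowerSeries.coeff n F = 1) ∧
      (PowerSeries.coeff n G = 0 ∨ PowerSeries.coeff n G = 1) := by
    intro n
    induction n using Nat.strong_induction_on with
    | _ n ih =>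
      constructor
      · rcases Nat.even_or_odd n with ⟨m, hm⟩ | ⟨m, hm⟩
        · subst hm
          rw [show m + m = 2 * m by ring, e1]
          rcases Nat.eq_zero_or_pos m with h | h
          · right; rw [h, b0]
          · exact (ih m (by omega)).2
        · -- n = 2m+1, odd; m even or odd
          rcases Nat.even_or_odd m with ⟨k, hk⟩ | ⟨k, hk⟩
          · subst hk; rw [hm, show 2 * (k + k) + 1 = 4 * k + 1 by ring, e2]
            rcases Nat.eq_zero_or_pos k with h | h
            · right; rw [h, a0]
            · exact (ih k (by omega)).1
          · subst hk; rw [hm, show 2 * (2 * k + 1) + 1 = 4 * k + 3 by ring, e3]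
            left; rfl
      · rcases Nat.even_or_odd n with ⟨m, hm⟩ | ⟨m, hm⟩
        · rcases Nat.even_or_odd m with ⟨k, hk⟩ | ⟨k, hk⟩
          · subst hk; rw [hm, show k + k + (k + k) = 4 * k by ring, e5]
            rcases Nat.eq_zero_or_pos k with h | h
            · right; rw [h, b0]
            · exact (ih k (by omega)).2
          · subst hk; rw [hm, show 2 * k + 1 + (2 * k + 1) = 4 * k + 2 by ring, e6]
            left; rfl
        · subst hm; rw [e4]
          rcases Nat.eq_zero_or_pos m with h | h
          · right; rw [h, a0]
          · exact (ih m (by omega)).1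
  exact ⟨fun n => ⟨e1 n, e2 n, e3 n, e4 n, e5 n, e6 n⟩,
    fun n => (key n).1, fun n => (key n).2⟩
end

section
/- The pair (F, G) defined by F(q) = G(q^2) + q·F(q^4), G(q) = q·F(q^2) + G(q^4), F(0)=G(0)=1, satisfies the decoupled equations F(q) = (1+q+q^2)·F(q^4) − q^4·F(q^16) and q·G(q) = (1+q+q^2)·G(q^4) − G(q^16). -/
lemma psub_add (k : ℕ) (f g : PowerSeries ℂ) :
    psub k (f + g) = psub k f + psub k g := by
  ext n
  simp only [psub, PowerSeries.coeff_mk, map_add]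
  split_ifs <;> simp

lemma psub_psub (a b : ℕ) (ha : 0 < a) (f : PowerSeries ℂ) :
    psub a (psub b f) = psub (a * b) f := by
  ext n
  simp only [psub, PowerSeries.coeff_mk]
  by_cases h : a ∣ n
  · rw [if_pos h]
    by_cases hb : b ∣ n / a
    · rw [if_pos hb, if_pos, Nat.div_div_eq_div_mul]
      rw [Nat.dvd_div_iff_mul_dvd h] at hb
      exact hb
    · rw [if_neg hb, if_neg]
      intro hab
      exact hb ((Nat.dvd_div_iff_mul_dvd h).2 hab)
  · rw [if_neg h, if_neg]
    exact fun hab => h (dvd_trans (Dvd.intro b rfl) hab)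

lemma psub_X_mul (k : ℕ) (hk : 0 < k) (f : PowerSeries ℂ) :
    psub k (PowerSeries.X * f) = PowerSeries.X ^ k * psub k f := by
  have e : (PowerSeries.X : PowerSeries ℂ) * f = PowerSeries.X ^ 1 * f := by
    rw [pow_one]
  rw [e]
  ext n
  simp only [psub, PowerSeries.coeff_mk, PowerSeries.coeff_X_pow_mul']
  by_cases hkn : k ∣ n
  · rw [if_pos hkn]
    by_cases h1 : k ≤ n
    · obtain ⟨c, rfl⟩ := hkn
      have hc : 1 ≤ c := by
        rcases Nat.eq_zero_or_pos c with rfl | h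
        · simp at h1; omega
        · exact h
      have hd : k ∣ k * c - k := ⟨c - 1, by rw [Nat.mul_sub, mul_one]⟩
      rw [if_pos h1, Nat.mul_div_cancel_left c hk, if_pos hc, if_pos hd]
      congr 1
      rw [show k * c - k = k * (c - 1) from by rw [Nat.mul_sub, mul_one],
        Nat.mul_div_cancel_left _ hk]
    · rw [if_neg h1, if_neg]
      rw [Nat.div_eq_of_lt (lt_of_not_ge h1)]
      omega
  · rw [if_neg hkn]
    by_cases h1 : k ≤ n
    · rw [if_pos h1, if_neg]
      intro h2
      exact hkn (Nat.sub_add_cancel h1 ▸ Nat.dvd_add h2 dvd_rfl)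
    · rw [if_neg h1]

theorem stmt6 (F G : PowerSeries ℂ)
    (hF0 : PowerSeries.constantCoeff F = 1)
    (hG0 : PowerSeries.constantCoeff G = 1)
    (hF : F = psub 2 G + PowerSeries.X * psub 4 F)
    (hG : G = PowerSeries.X * psub 2 F + psub 4 G) :
    F = (1 + PowerSeries.X + PowerSeries.X ^ 2) * psub 4 F
        - PowerSeries.X ^ 4 * psub 16 F ∧
    PowerSeries.X * G = (1 + PowerSeries.X + PowerSeries.X ^ 2) * psub 4 G
        - psub 16 G := by
  have h2G : psub 2 G = PowerSeries.X ^ 2 * psub 4 F + psub 8 G := by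
    conv_lhs => rw [hG]
    rw [psub_add, psub_X_mul 2 (by norm_num), psub_psub 2 2 (by norm_num),
      psub_psub 2 4 (by norm_num)]
  have h4F : psub 4 F = psub 8 G + PowerSeries.X ^ 4 * psub 16 F := by
    conv_lhs => rw [hF]
    rw [psub_add, psub_X_mul 4 (by norm_num), psub_psub 4 2 (by norm_num),
      psub_psub 4 4 (by norm_num)]
  have h2F : psub 2 F = psub 4 G + PowerSeries.X ^ 2 * psub 8 F := by
    conv_lhs => rw [hF]
    rw [psub_add, psub_X_mul 2 (by norm_num), psub_psub 2 2 (by norm_num),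
      psub_psub 2 4 (by norm_num)]
  have h4G : psub 4 G = PowerSeries.X ^ 4 * psub 8 F + psub 16 G := by
    conv_lhs => rw [hG]
    rw [psub_add, psub_X_mul 4 (by norm_num), psub_psub 4 2 (by norm_num),
      psub_psub 4 4 (by norm_num)]
  constructor
  · have h8G : psub 8 G = psub 4 F - PowerSeries.X ^ 4 * psub 16 F := by
      rw [h4F]; ring
    calc F = psub 2 G + PowerSeries.X * psub 4 F := hF
      _ = PowerSeries.X ^ 2 * psub 4 F + (psub 4 F - PowerSeries.X ^ 4 * psub 16 F)
            + PowerSeries.X * psub 4 F := by rw [h2G, h8G]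
      _ = _ := by ring
  · have h8F : PowerSeries.X ^ 4 * psub 8 F = psub 4 G - psub 16 G := by
      rw [h4G]; ring
    calc PowerSeries.X * G
        = PowerSeries.X * (PowerSeries.X * psub 2 F + psub 4 G) := by rw [← hG]
      _ = PowerSeries.X ^ 2 * psub 2 F + PowerSeries.X * psub 4 G := by ring
      _ = PowerSeries.X ^ 2 * (psub 4 G + PowerSeries.X ^ 2 * psub 8 F)
            + PowerSeries.X * psub 4 G := by rw [h2F]
      _ = PowerSeries.X ^ 2 * psub 4 G + PowerSeries.X ^ 4 * psub 8 F
            + PowerSeries.X * psub 4 G := by ring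
      _ = _ := by rw [h8F]; ring
end

section
/- The pair (F, G) with F(0)=G(0)=1 satisfying F(q) = G(q^2) + q·F(q^4) and G(q) = q·F(q^2) + G(q^4) satisfies G(q)·G(q^2) − q·F(q)·F(q^2) = 1 and F(q)·G(q^4) − q·G(q)·F(q^4) = 1. -/
open PowerSeries

lemma psub_coeff (k n : ℕ) (f : PowerSeries ℂ) :
    coeff n (psub k f) = if k ∣ n then coeff (n / k) f else 0 := coeff_mk _ _

lemma psub_sub (k : ℕ) (f g : PowerSeries ℂ) :
    psub k (f - g) = psub k f - psub k g := by
  ext n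
  rw [map_sub, psub_coeff, psub_coeff, psub_coeff, map_sub]
  split_ifs <;> simp

lemma psub_constantCoeff (k : ℕ) (f : PowerSeries ℂ) :
    constantCoeff (psub k f) = constantCoeff f := by
  rw [← coeff_zero_eq_constantCoeff, psub_coeff]
  simp

lemma psub_one (k : ℕ) (hk : 0 < k) : psub k (1 : PowerSeries ℂ) = 1 := by
  ext n
  rw [psub_coeff]
  simp only [coeff_one]
  by_cases hn : n = 0
  · subst hn; simp
  · rw [if_neg hn]
    split_ifs with h1 h2
    · exact absurd h2 (Nat.div_pos (Nat.le_of_dvd (Nat.pos_of_ne_zero hn) h1) hk).ne'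
    · rfl
    · rfl

lemma psub_X (k : ℕ) (hk : 0 < k) : psub k (X : PowerSeries ℂ) = X ^ k := by
  ext n
  rw [psub_coeff, coeff_X_pow]
  simp only [coeff_X]
  by_cases hn : n = k
  · subst hn; simp [Nat.div_self hk, hk.ne']
  · rw [if_neg hn]
    split_ifs with h1 h2
    · obtain ⟨c, rfl⟩ := h1
      rw [Nat.mul_div_cancel_left _ hk] at h2
      exact absurd (by rw [h2, mul_one]) hn
    · rfl
    · rfl

lemma psub_psub_s7 (k m : ℕ) (hk : 0 < k) (f : PowerSeries ℂ) :
    psub k (psub m f) = psub (k * m) f := by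
  ext n
  simp only [psub_coeff]
  by_cases h1 : k ∣ n
  · simp only [if_pos h1, Nat.div_div_eq_div_mul, Nat.dvd_div_iff_mul_dvd h1]
  · rw [if_neg h1, if_neg fun h => h1 (dvd_trans ⟨m, rfl⟩ h)]

lemma psub_mul (k : ℕ) (hk : 0 < k) (f g : PowerSeries ℂ) :
    psub k (f * g) = psub k f * psub k g := by
  ext n
  rw [psub_coeff, PowerSeries.coeff_mul n (psub k f) (psub k g)]
  have hterm : ∀ p ∈ Finset.HasAntidiagonal.antidiagonal n, (coeff p.1 (psub k f)) * (coeff p.2 (psub k g))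
      = if k ∣ p.1 ∧ k ∣ p.2 then coeff (p.1 / k) f * coeff (p.2 / k) g else 0 := by
    intro p _
    rw [psub_coeff, psub_coeff]
    rcases em (k ∣ p.1) with h1 | h1 <;> rcases em (k ∣ p.2) with h2 | h2 <;>
      simp [h1, h2]
  rw [Finset.sum_congr rfl hterm, Finset.sum_ite, Finset.sum_const_zero, add_zero]
  by_cases hn : k ∣ n
  · rw [if_pos hn, coeff_mul]
    refine (Finset.sum_nbij' (fun p => (p.1 / k, p.2 / k)) (fun p => (k * p.1, k * p.2))
      ?_ ?_ ?_ ?_ ?_).symm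
    · rintro ⟨a, b⟩ hp
      simp only [Finset.mem_filter, Finset.HasAntidiagonal.mem_antidiagonal] at hp
      obtain ⟨h, ⟨c, rfl⟩, ⟨d, rfl⟩⟩ := hp
      simp only [Finset.HasAntidiagonal.mem_antidiagonal, Nat.mul_div_cancel_left _ hk]
      refine Nat.eq_of_mul_eq_mul_left hk ?_
      rw [Nat.mul_div_cancel' hn, mul_add, h]
    · rintro ⟨a, b⟩ hp
      have h := Finset.HasAntidiagonal.mem_antidiagonal.mp hp
      simp only [Finset.mem_filter, Finset.HasAntidiagonal.mem_antidiagonal]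
      exact ⟨by rw [← mul_add, h, Nat.mul_div_cancel' hn], dvd_mul_right k a, dvd_mul_right k b⟩
    · rintro ⟨a, b⟩ hp
      simp only [Finset.mem_filter, Finset.HasAntidiagonal.mem_antidiagonal] at hp
      obtain ⟨-, h1, h2⟩ := hp
      simp [Nat.mul_div_cancel' h1, Nat.mul_div_cancel' h2]
    · rintro ⟨a, b⟩ hp
      simp [Nat.mul_div_cancel_left _ hk]
    · rintro ⟨a, b⟩ hp
      rfl
  · rw [if_neg hn]
    refine (Finset.sum_eq_zero fun p hp => absurd ?_ hn).symm
    have hp' := Finset.mem_filter.mp hp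
    rw [← Finset.HasAntidiagonal.mem_antidiagonal.mp hp'.1]
    exact Nat.dvd_add hp'.2.1 hp'.2.2


lemma eq_one_of_psub_fix (A : PowerSeries ℂ) (h : psub 2 A = A)
    (h0 : constantCoeff A = 1) : A = 1 := by
  have hz : ∀ n, 0 < n → coeff n A = 0 := by
    intro n
    induction n using Nat.strong_induction_on with
    | _ n ih =>
      intro hn
      rw [← h, psub_coeff]
      split_ifs with hd
      · exact ih (n / 2) (Nat.div_lt_self hn one_lt_two)
          (Nat.div_pos (Nat.le_of_dvd hn hd) two_pos)
      · rfl
  ext n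
  rw [coeff_one]
  rcases Nat.eq_zero_or_pos n with rfl | hn
  · rw [if_pos rfl, coeff_zero_eq_constantCoeff, h0]
  · rw [if_neg hn.ne', hz n hn]

lemma alg_key {R : Type*} [CommRing R] (X F G F2 G2 F4 G4 : R)
    (hF : F = G2 + X * F4) (hG : G = X * F2 + G4) :
    G * G2 - X * F * F2 = G2 * G4 - X ^ 2 * F2 * F4 := by
  subst hF hG; ring

lemma alg_key2 {R : Type*} [CommRing R] (X F G F2 G2 F4 G4 : R)
    (hF : F = G2 + X * F4) (hG : G = X * F2 + G4) :
    F * G4 - X * G * F4 = G2 * G4 - X ^ 2 * F2 * F4 := by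
  subst hF hG; ring

theorem stmt7 (F G : PowerSeries ℂ)
    (hF0 : PowerSeries.constantCoeff F = 1)
    (hG0 : PowerSeries.constantCoeff G = 1)
    (hF : F = psub 2 G + PowerSeries.X * psub 4 F)
    (hG : G = PowerSeries.X * psub 2 F + psub 4 G) :
    G * psub 2 G - PowerSeries.X * F * psub 2 F = 1 ∧
    F * psub 4 G - PowerSeries.X * G * psub 4 F = 1 := by
  have h22 : psub 2 (psub 2 F) = psub 4 F := psub_psub_s7 2 2 two_pos F
  have h22' : psub 2 (psub 2 G) = psub 4 G := psub_psub_s7 2 2 two_pos G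
  have hexp : psub 2 (G * psub 2 G - X * F * psub 2 F)
      = psub 2 G * psub 4 G - X ^ 2 * psub 2 F * psub 4 F := by
    rw [psub_sub, psub_mul 2 two_pos, psub_mul 2 two_pos, psub_mul 2 two_pos,
      psub_X 2 two_pos, h22, h22']
  have hfix : psub 2 (G * psub 2 G - X * F * psub 2 F)
      = G * psub 2 G - X * F * psub 2 F := by
    rw [hexp, alg_key X F G (psub 2 F) (psub 2 G) (psub 4 F) (psub 4 G) hF hG]
  have hA0 : constantCoeff (G * psub 2 G - X * F * psub 2 F) = 1 := by
    rw [map_sub, map_mul, map_mul, map_mul, psub_constantCoeff, hG0,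
      constantCoeff_X, zero_mul, zero_mul, sub_zero, one_mul]
  have hA : G * psub 2 G - X * F * psub 2 F = 1 := eq_one_of_psub_fix _ hfix hA0
  refine ⟨hA, ?_⟩
  rw [alg_key2 X F G (psub 2 F) (psub 2 G) (psub 4 F) (psub 4 G) hF hG, ← hexp, hA,
    psub_one 2 two_pos]
end

section
/- Define truncated polynomials H_n(x) = Σ_{m=0}^{2^n−1} c_m x^m from the coefficients c_m of H (with H_n = 1 for n < 0). Then for all n ≥ 1, H_n(x) = H_{n−1}(x^2) + x·H_{n−2}(x^4). -/
private lemma coeff_trunc_comp (H : PowerSeries ℂ) (N k m : ℕ) (hk : 0 < k) :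
    ((PowerSeries.trunc N H).comp (Polynomial.X ^ k)).coeff m =
      if k ∣ m ∧ m < k * N then PowerSeries.coeff (m / k) H else 0 := by
  rw [← Polynomial.expand_eq_comp_X_pow, Polynomial.coeff_expand hk,
    PowerSeries.coeff_trunc]
  rcases em (k ∣ m) with h | h
  · simp [h, Nat.div_lt_iff_lt_mul hk, mul_comm]
  · simp [h]

private lemma coeff_heq (H : PowerSeries ℂ)
    (heq : H = psub 2 H + PowerSeries.X * psub 4 H) (m : ℕ) :
    PowerSeries.coeff m H =
      (if 2 ∣ m then PowerSeries.coeff (m / 2) H else 0) +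
      (if 1 ≤ m ∧ 4 ∣ (m - 1) then PowerSeries.coeff ((m - 1) / 4) H else 0) := by
  conv_lhs => rw [heq]
  rw [map_add]
  congr 1
  · simp [psub, PowerSeries.coeff_mk]
  · cases m with
    | zero => simp [PowerSeries.coeff_zero_X_mul]
    | succ k =>
      rw [PowerSeries.coeff_succ_X_mul]
      simp [psub, PowerSeries.coeff_mk]

theorem stmt8 (H : PowerSeries ℂ)
    (h1 : PowerSeries.constantCoeff H = 1)
    (heq : H = psub 2 H + PowerSeries.X * psub 4 H)
    (Hn : ℤ → Polynomial ℂ)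
    (hneg : ∀ n : ℤ, n < 0 → Hn n = 1)
    (htr : ∀ n : ℕ, Hn n = PowerSeries.trunc (2 ^ n) H) :
    ∀ n : ℕ, 1 ≤ n →
      Hn n = (Hn ((n : ℤ) - 1)).comp (Polynomial.X ^ 2)
        + Polynomial.X * (Hn ((n : ℤ) - 2)).comp (Polynomial.X ^ 4) := by
  intro n hn
  have h0 : PowerSeries.coeff 0 H = 1 := by
    rw [← PowerSeries.coeff_zero_eq_constantCoeff] at h1; exact h1
  have h1' : ((n : ℤ) - 1) = ((n - 1 : ℕ) : ℤ) := by push_cast [hn]; ring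
  rw [h1', htr n, htr (n - 1)]
  rcases Nat.lt_or_ge n 2 with h2 | h2
  · -- n = 1
    have hn1 : n = 1 := by omega
    subst hn1
    have h2' : ((1 : ℕ) : ℤ) - 2 = -1 := by norm_num
    rw [h2', hneg (-1) (by norm_num)]
    have hc1 : PowerSeries.coeff 1 H = 1 := by
      have := coeff_heq H heq 1
      norm_num [h0] at this
      exact this
    ext m
    rw [PowerSeries.coeff_trunc]
    simp only [Polynomial.coeff_add, Polynomial.one_comp, mul_one]
    rw [coeff_trunc_comp H _ 2 m (by norm_num), Polynomial.coeff_X]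
    match m with
    | 0 => norm_num [h0]
    | 1 => norm_num [hc1]
    | (k + 2) =>
      have ha : ¬ (k + 2 < 2 ^ 1) := by omega
      have hb : ¬ (2 ∣ k + 2 ∧ k + 2 < 2 * 2 ^ (1 - 1)) := by
        simp only [Nat.sub_self, pow_zero]; omega
      have hd : ¬ ((1 : ℕ) = k + 2) := by omega
      rw [if_neg ha, if_neg hb, if_neg hd, add_zero]
  · -- n ≥ 2
    have h2'' : ((n : ℤ) - 2) = ((n - 2 : ℕ) : ℤ) := by push_cast [h2]; ring
    rw [h2'', htr (n - 2)]
    ext m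
    rw [PowerSeries.coeff_trunc]
    simp only [Polynomial.coeff_add]
    rw [coeff_trunc_comp H _ 2 m (by norm_num)]
    have hA : 2 * 2 ^ (n - 1) = 2 ^ n := by
      rw [← pow_succ']
      congr 1; omega
    have hB : 4 * 2 ^ (n - 2) = 2 ^ n := by
      have : (4 : ℕ) = 2 ^ 2 := by norm_num
      rw [this, ← pow_add]
      congr 1; omega
    have hXB : (Polynomial.X * ((PowerSeries.trunc (2 ^ (n - 2)) H).comp
        (Polynomial.X ^ 4))).coeff m =
        if 1 ≤ m ∧ 4 ∣ (m - 1) ∧ m - 1 < 4 * 2 ^ (n - 2) then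
          PowerSeries.coeff ((m - 1) / 4) H else 0 := by
      cases m with
      | zero => simp
      | succ k =>
        rw [Polynomial.coeff_X_mul, coeff_trunc_comp H _ 4 k (by norm_num)]
        simp only [Nat.succ_sub_one]
        congr 1
        simp only [eq_iff_iff]
        omega
    rw [hXB, hA, hB]
    rcases Nat.lt_or_ge m (2 ^ n) with hm | hm
    · rw [if_pos hm, coeff_heq H heq m]
      congr 1
      · rcases em (2 ∣ m) with h | h
        · rw [if_pos h, if_pos ⟨h, hm⟩]
        · rw [if_neg h, if_neg (by tauto)]
      · rcases em (1 ≤ m ∧ 4 ∣ (m - 1)) with h | h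
        · rw [if_pos h, if_pos ⟨h.1, h.2, by omega⟩]
        · rw [if_neg h, if_neg (by tauto)]
    · rw [if_neg (by omega)]
      have hA0 : ¬ (2 ∣ m ∧ m < 2 ^ n) := by omega
      have hB0 : ¬ (1 ≤ m ∧ 4 ∣ (m - 1) ∧ m - 1 < 2 ^ n) := by
        rintro ⟨hm1, hd, hlt⟩
        have hmn : m = 2 ^ n := by omega
        have hodd : ¬ (4 ∣ (2 ^ n - 1)) := by
          intro hd4
          have h2d : 2 ∣ (2 ^ n - 1) := dvd_trans (by norm_num) hd4
          have : 2 ∣ 2 ^ n := dvd_pow_self 2 (by omega)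
          omega
        rw [hmn] at hd; exact hodd hd
      rw [if_neg hA0, if_neg hB0, add_zero]
end

section
/- Define λ⁺_n(x) by λ⁺_0(x) = 1 and λ⁺_{n+1}(x) = x + 1/λ⁺_n(x^2). Then λ⁺_n(x) = I_n(x)/I_{n−1}(x^2), where I_n are truncations of the Baum–Sweet generating function I. -/
theorem stmt15 (I : PowerSeries ℂ)
    (h1 : PowerSeries.constantCoeff I = 1)
    (heq : I = PowerSeries.X * psub 2 I + psub 4 I)
    (In : ℤ → Polynomial ℂ)
    (hneg : ∀ n : ℤ, n < 0 → In n = 1)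
    (htr : ∀ n : ℕ, In n = PowerSeries.trunc (2 ^ n) I)
    (lam : ℕ → RatFunc ℂ)
    (hlam0 : lam 0 = 1)
    (hlam : ∀ n : ℕ, lam (n + 1)
      = RatFunc.X + 1 / RatFunc.eval (algebraMap ℂ (RatFunc ℂ)) (RatFunc.X ^ 2) (lam n)) :
    ∀ n : ℕ, lam n
      = algebraMap (Polynomial ℂ) (RatFunc ℂ) (In n)
        / algebraMap (Polynomial ℂ) (RatFunc ℂ) ((In ((n : ℤ) - 1)).comp (Polynomial.X ^ 2)) := by
  classical
  set d : ℕ → ℂ := fun m => PowerSeries.coeff m I with hd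
  have hpsub : ∀ (k n : ℕ), PowerSeries.coeff n (psub k I)
      = if k ∣ n then d (n / k) else 0 := fun k n => by
    simp [psub, hd]
  have hd0 : d 0 = 1 := by simpa [hd, PowerSeries.coeff_zero_eq_constantCoeff] using h1
  have hXeven : ∀ m : ℕ, PowerSeries.coeff (2 * m) (PowerSeries.X * psub 2 I) = 0 := by
    intro m
    cases m with
    | zero => simp
    | succ m =>
        rw [show 2 * (m + 1) = (2 * m + 1) + 1 by ring, PowerSeries.coeff_succ_X_mul, hpsub]
        have : ¬ (2 ∣ 2 * m + 1) := by omega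
        simp [this]
  have hodd : ∀ m : ℕ, d (2 * m + 1) = d m := by
    intro m
    have h := congrArg (fun f => PowerSeries.coeff (2 * m + 1) f) heq
    simp only [map_add, PowerSeries.coeff_succ_X_mul, hpsub] at h
    have h2 : (2 : ℕ) ∣ 2 * m := ⟨m, rfl⟩
    have h4 : ¬ (4 : ℕ) ∣ 2 * m + 1 := by omega
    rw [if_pos h2, if_neg h4] at h
    simpa [hd, Nat.mul_div_cancel_left] using h
  have h4d : ∀ m : ℕ, d (4 * m) = d m := by
    intro m
    have hX : PowerSeries.coeff (4 * m) (PowerSeries.X * psub 2 I) = 0 := by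
      rw [show 4 * m = 2 * (2 * m) by ring]; exact hXeven _
    have h := congrArg (fun f => PowerSeries.coeff (4 * m) f) heq
    simp only [map_add] at h
    rw [hX, zero_add, hpsub, if_pos ⟨m, rfl⟩, Nat.mul_div_cancel_left _ (by norm_num)] at h
    exact h
  have h42 : ∀ m : ℕ, d (4 * m + 2) = 0 := by
    intro m
    have hX : PowerSeries.coeff (4 * m + 2) (PowerSeries.X * psub 2 I) = 0 := by
      rw [show 4 * m + 2 = 2 * (2 * m + 1) by ring]; exact hXeven _
    have h := congrArg (fun f => PowerSeries.coeff (4 * m + 2) f) heq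
    simp only [map_add] at h
    rw [hX, zero_add, hpsub, if_neg (by omega : ¬ (4 ∣ 4 * m + 2))] at h
    exact h
  have htrc : ∀ (n k : ℕ), (In n).coeff k = if k < 2 ^ n then d k else 0 := fun n k => by
    rw [htr n, PowerSeries.coeff_trunc]
  have hIn00 : ∀ z : ℤ, (In z).coeff 0 = 1 := by
    intro z
    rcases lt_or_ge z 0 with h | h
    · rw [hneg z h]; simp
    · lift z to ℕ using h
      rw [htrc z 0, if_pos (by positivity), hd0]
  have hInne : ∀ z : ℤ, In z ≠ 0 := by
    intro z hz
    have := hIn00 z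
    rw [hz] at this
    simp at this
  -- auxiliary coefficient computations for `X * expand 2 q`
  have hpe : ∀ (q : Polynomial ℂ) (m : ℕ),
      (Polynomial.X * Polynomial.expand ℂ 2 q).coeff (2 * m) = 0 := by
    intro q m
    cases m with
    | zero => simp
    | succ m =>
        rw [show 2 * (m + 1) = (2 * m + 1) + 1 by ring, Polynomial.coeff_X_mul,
          Polynomial.coeff_expand (by norm_num : 0 < 2)]
        have : ¬ (2 ∣ 2 * m + 1) := by omega
        simp [this]
  have hpo : ∀ (q : Polynomial ℂ) (m : ℕ),
      (Polynomial.X * Polynomial.expand ℂ 2 q).coeff (2 * m + 1) = q.coeff m := by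
    intro q m
    rw [Polynomial.coeff_X_mul, Polynomial.coeff_expand (by norm_num : 0 < 2),
      if_pos ⟨m, rfl⟩, Nat.mul_div_cancel_left _ (by norm_num)]
  have hrec : ∀ n : ℕ,
      In (n + 1 : ℕ) = Polynomial.X * Polynomial.expand ℂ 2 (In n)
        + Polynomial.expand ℂ 4 (In ((n : ℤ) - 1)) := by
    intro n
    ext k
    rw [Polynomial.coeff_add, htrc (n + 1) k]
    rcases Nat.even_or_odd k with ⟨j, hj⟩ | ⟨j, hj⟩
    · obtain rfl : k = 2 * j := by omega
      rw [hpe, Polynomial.coeff_expand (by norm_num : 0 < 4), zero_add]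
      by_cases h2j : 2 ∣ j
      · obtain ⟨i, rfl⟩ := h2j
        have hdvd : (4 : ℕ) ∣ 2 * (2 * i) := ⟨i, by ring⟩
        rw [if_pos hdvd, show 2 * (2 * i) / 4 = i by omega,
          show 2 * (2 * i) = 4 * i by ring, h4d]
        cases n with
        | zero =>
            rw [hneg _ (by norm_num : (((0 : ℕ) : ℤ) - 1) < 0), Polynomial.coeff_one]
            by_cases hi : i = 0
            · subst hi; rw [if_pos (by norm_num), hd0, if_pos rfl]
            · rw [if_neg (by rw [pow_one]; omega), if_neg hi]
        | succ m =>
            rw [show ((m + 1 : ℕ) : ℤ) - 1 = ((m : ℕ) : ℤ) by push_cast; ring, htrc m i]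
            have hiff : 4 * i < 2 ^ (m + 1 + 1) ↔ i < 2 ^ m := by
              rw [pow_succ, pow_succ]; omega
            simp only [hiff]
      · obtain ⟨i, rfl⟩ : ∃ i, j = 2 * i + 1 := ⟨j / 2, by omega⟩
        have hnd : ¬ (4 : ℕ) ∣ 2 * (2 * i + 1) := by omega
        rw [if_neg hnd, show 2 * (2 * i + 1) = 4 * i + 2 by ring, h42]
        simp
    · subst hj
      rw [hpo]
      have h4 : ¬ (4 ∣ 2 * j + 1) := by omega
      rw [Polynomial.coeff_expand (by norm_num : 0 < 4), if_neg h4, add_zero,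
        htrc n j, hodd]
      have hiff : 2 * j + 1 < 2 ^ (n + 1) ↔ j < 2 ^ n := by
        rw [pow_succ]; omega
      simp only [hiff]
  -- the substitution ring hom on rational functions
  set ψ : Polynomial ℂ →+* RatFunc ℂ :=
    (algebraMap (Polynomial ℂ) (RatFunc ℂ)).comp (Polynomial.expand ℂ 2).toRingHom with hψ
  have hψapp : ∀ p : Polynomial ℂ,
      ψ p = algebraMap (Polynomial ℂ) (RatFunc ℂ) (Polynomial.expand ℂ 2 p) := fun p => rfl
  have hmem : nonZeroDivisors (Polynomial ℂ) ≤
      Submonoid.comap ψ (nonZeroDivisors (RatFunc ℂ)) := by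
    intro p hp
    rw [mem_nonZeroDivisors_iff_ne_zero] at hp
    rw [Submonoid.mem_comap, mem_nonZeroDivisors_iff_ne_zero, hψapp]
    exact RatFunc.algebraMap_ne_zero ((Polynomial.expand_ne_zero (by norm_num)).mpr hp)
  have heval2 : Polynomial.eval₂RingHom (algebraMap ℂ (RatFunc ℂ)) (RatFunc.X ^ 2) = ψ := by
    apply Polynomial.ringHom_ext
    · intro a
      rw [show (Polynomial.eval₂RingHom (algebraMap ℂ (RatFunc ℂ)) (RatFunc.X ^ 2))
            (Polynomial.C a)
          = Polynomial.eval₂ (algebraMap ℂ (RatFunc ℂ)) (RatFunc.X ^ 2) (Polynomial.C a) from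
          congrFun (Polynomial.coe_eval₂RingHom _ _) _,
        Polynomial.eval₂_C, hψapp, Polynomial.expand_C, RatFunc.algebraMap_C,
        RatFunc.algebraMap_eq_C]
    · rw [show (Polynomial.eval₂RingHom (algebraMap ℂ (RatFunc ℂ)) (RatFunc.X ^ 2))
            Polynomial.X
          = Polynomial.eval₂ (algebraMap ℂ (RatFunc ℂ)) (RatFunc.X ^ 2) Polynomial.X from
          congrFun (Polynomial.coe_eval₂RingHom _ _) _,
        Polynomial.eval₂_X, hψapp, Polynomial.expand_X, map_pow, RatFunc.algebraMap_X]
  have heval2' : ∀ p : Polynomial ℂ,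
      Polynomial.eval₂ (algebraMap ℂ (RatFunc ℂ)) (RatFunc.X ^ 2) p = ψ p := fun p => by
    rw [← heval2]; rfl
  have hE : ∀ r : RatFunc ℂ, RatFunc.eval (algebraMap ℂ (RatFunc ℂ)) (RatFunc.X ^ 2) r
      = RatFunc.liftRingHom ψ hmem r := by
    intro r
    rw [RatFunc.eval, RatFunc.liftRingHom_apply, heval2', heval2']
  -- main induction
  intro n
  induction n with
  | zero =>
      rw [hlam0]
      rw [hneg _ (by norm_num : (((0 : ℕ) : ℤ) - 1) < 0), Polynomial.one_comp, map_one, div_one]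
      have hIn0 : In ((0 : ℕ) : ℤ) = 1 := by
        ext k
        rw [htrc 0 k]
        cases k with
        | zero => simp [hd0]
        | succ m => simp [Polynomial.coeff_one]
      rw [hIn0, map_one]
  | succ n ih =>
      rw [hlam n, ih, hE, RatFunc.liftRingHom_apply_div, hψapp, hψapp,
        ← Polynomial.expand_eq_comp_X_pow, Polynomial.expand_expand,
        show (2 * 2 : ℕ) = 4 by norm_num, one_div_div]
      have hc : ((n + 1 : ℕ) : ℤ) - 1 = (n : ℕ) := by push_cast; ring
      rw [hc, ← Polynomial.expand_eq_comp_X_pow, hrec n, map_add, map_mul,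
        RatFunc.algebraMap_X]
      have hb : algebraMap (Polynomial ℂ) (RatFunc ℂ) (Polynomial.expand ℂ 2 (In n)) ≠ 0 :=
        RatFunc.algebraMap_ne_zero ((Polynomial.expand_ne_zero (by norm_num)).mpr (hInne n))
      rw [add_div, mul_div_cancel_right₀ _ hb]
end

section
/- (Folding Lemma) Let [a_0; a_1, …, a_n] be a continued fraction with convergents p_n/q_n, let w = (a_1,…,a_n), and let t ≠ 0. Then [a_0; w, t, −←w] = p_n/q_n + (−1)^n/(t·q_n^2), where −←w denotes the negated reversal of w. -/
/-- Value of a finite continued fraction `[a₀; a₁, …, aₙ]` given as a list.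
`cfVal [] = 0`, and `cfVal (a :: l) = a + 1/(cfVal l)` (so `cfVal [a] = a`). -/
noncomputable def cfVal {K : Type*} [Field K] : List K → K
  | [] => 0
  | a :: l => a + (cfVal l)⁻¹

namespace FoldAux

variable {K : Type*} [Field K]

/-- Continuant "matrix" (A, B, C, D) of a list. -/
def cont : List K → K × K × K × K
  | [] => (1, 0, 0, 1)
  | x :: l =>
    (x * (cont l).1 + (cont l).2.2.1, x * (cont l).2.1 + (cont l).2.2.2,
      (cont l).1, (cont l).2.1)

def cmul (x y : K × K × K × K) : K × K × K × K :=
  (x.1 * y.1 + x.2.1 * y.2.2.1, x.1 * y.2.1 + x.2.1 * y.2.2.2,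
   x.2.2.1 * y.1 + x.2.2.2 * y.2.2.1, x.2.2.1 * y.2.1 + x.2.2.2 * y.2.2.2)

lemma cont_append (l₁ l₂ : List K) : cont (l₁ ++ l₂) = cmul (cont l₁) (cont l₂) := by
  induction l₁ with
  | nil => simp [cont, cmul]
  | cons x l ih =>
      simp only [List.cons_append, cont]
      rw [ih]
      simp only [cmul, Prod.mk.injEq]
      exact ⟨by ring, by ring, trivial⟩

lemma cfVal_eq (l : List K)
    (h : ∀ m : ℕ, 1 ≤ m → l.drop m ≠ [] → cfVal (l.drop m) ≠ 0) :
    cfVal l = (cont l).1 / (cont l).2.2.1 := by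
  induction l with
  | nil => simp [cfVal, cont]
  | cons x l ih =>
      have hl : cfVal l = (cont l).1 / (cont l).2.2.1 := by
        apply ih
        intro m hm hne
        have := h (m + 1) (by omega) (by simpa using hne)
        simpa using this
      rcases eq_or_ne l [] with rfl | hne
      · simp [cfVal, cont]
      · have h0 : cfVal l ≠ 0 := by
          have := h 1 le_rfl (by simpa using hne)
          simpa using this
        have hA : (cont l).1 ≠ 0 := by
          intro hA; rw [hl, hA, zero_div] at h0; exact h0 rfl
        show x + (cfVal l)⁻¹ = _
        rw [hl, inv_div]
        show _ = (x * (cont l).1 + (cont l).2.2.1) / (cont l).1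
        field_simp

end FoldAux

open FoldAux

theorem stmt17 {K : Type*} [Field K] (a : ℕ → K) (n : ℕ) (t : K) (ht : t ≠ 0)
    (p q : ℤ → K)
    (hpm : p (-1) = 1) (hqm : q (-1) = 0)
    (hp0 : p 0 = a 0) (hq0 : q 0 = 1)
    (hp : ∀ m : ℕ, 1 ≤ m → p m = a m * p ((m : ℤ) - 1) + p ((m : ℤ) - 2))
    (hq : ∀ m : ℕ, 1 ≤ m → q m = a m * q ((m : ℤ) - 1) + q ((m : ℤ) - 2))
    (hqn : q n ≠ 0)
    -- the folded continued fraction [a₀; w, t, −←w] with w = (a₁,…,aₙ)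
    (hden : ∀ m : ℕ, 1 ≤ m →
      ((List.ofFn fun i : Fin (n + 1) => a i) ++ t ::
          List.ofFn fun i : Fin n => -a (n - (i : ℕ))).drop m ≠ [] →
      cfVal (((List.ofFn fun i : Fin (n + 1) => a i) ++ t ::
          List.ofFn fun i : Fin n => -a (n - (i : ℕ))).drop m) ≠ 0) :
    cfVal ((List.ofFn fun i : Fin (n + 1) => a i) ++ t ::
        List.ofFn fun i : Fin n => -a (n - (i : ℕ)))
      = p n / q n + (-1) ^ n / (t * q n ^ 2) := by
  -- continuants of the initial segment
  have Hcont : ∀ N : ℕ, cont (List.ofFn fun i : Fin (N + 1) => a i)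
      = (p N, p ((N : ℤ) - 1), q N, q ((N : ℤ) - 1)) := by
    intro N
    induction N with
    | zero =>
        simp [cont, hp0, hq0]
        constructor
        · show _ = p ((0:ℤ) - 1); norm_num [hpm]
        · show _ = q ((0:ℤ) - 1); norm_num [hqm]
    | succ N ih =>
        rw [List.ofFn_succ']
        simp only [Fin.coe_castSucc, Fin.val_last, List.concat_eq_append]
        rw [cont_append, ih]
        have e1 : ((N + 1 : ℕ) : ℤ) - 1 = (N : ℤ) := by push_cast; ring
        have e2 : ((N + 1 : ℕ) : ℤ) - 2 = (N : ℤ) - 1 := by push_cast; ring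
        have hpN := hp (N + 1) (by omega)
        have hqN := hq (N + 1) (by omega)
        rw [e1, e2] at hpN hqN
        simp only [cont, cmul, Prod.mk.injEq]
        refine ⟨?_, ?_, ?_, ?_⟩
        · rw [hpN]; push_cast; ring
        · push_cast; ring
        · rw [hqN]; push_cast; ring
        · push_cast; ring
  -- continuants of the negated reversed word
  have Hl2 : ∀ N : ℕ,
      (cont (List.ofFn fun i : Fin N => -a (N - (i : ℕ)))).1 = (-1) ^ N * q N ∧
      (cont (List.ofFn fun i : Fin N => -a (N - (i : ℕ)))).2.2.1
        = -((-1) ^ N * q ((N : ℤ) - 1)) := by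
    intro N
    induction N with
    | zero => simp [cont, hq0, hqm]
    | succ N ih =>
        have hlist : (List.ofFn fun i : Fin (N + 1) => -a (N + 1 - (i : ℕ)))
            = (-a (N + 1)) :: List.ofFn fun i : Fin N => -a (N - (i : ℕ)) := by
          rw [List.ofFn_succ]
          simp [Nat.succ_sub_succ]
        rw [hlist]
        have e1 : ((N + 1 : ℕ) : ℤ) - 1 = (N : ℤ) := by push_cast; ring
        have e2 : ((N + 1 : ℕ) : ℤ) - 2 = (N : ℤ) - 1 := by push_cast; ring
        have hqN := hq (N + 1) (by omega)
        rw [e1, e2] at hqN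
        obtain ⟨ihA, ihC⟩ := ih
        constructor
        · show (-a (N + 1)) * _ + _ = _
          rw [ihA, ihC, hqN]; ring
        · have hr : (cont ((-a (N + 1)) :: List.ofFn fun i : Fin N => -a (N - (i : ℕ)))).2.2.1
              = (cont (List.ofFn fun i : Fin N => -a (N - (i : ℕ)))).1 := rfl
          rw [hr, ihA, e1]
          ring
  -- determinant identity
  have Hdet : ∀ N : ℕ, p N * q ((N : ℤ) - 1) - p ((N : ℤ) - 1) * q N = (-1) ^ (N + 1) := by
    intro N
    induction N with
    | zero =>
        have e0 : ((0 : ℕ) : ℤ) - 1 = (-1 : ℤ) := by norm_num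
        rw [e0]
        push_cast
        rw [hp0, hq0, hpm, hqm]
        ring
    | succ N ih =>
        have e1 : ((N + 1 : ℕ) : ℤ) - 1 = (N : ℤ) := by push_cast; ring
        have e2 : ((N + 1 : ℕ) : ℤ) - 2 = (N : ℤ) - 1 := by push_cast; ring
        have hpN := hp (N + 1) (by omega)
        have hqN := hq (N + 1) (by omega)
        rw [e1, e2] at hpN hqN
        rw [e1, hpN, hqN]
        linear_combination (-1 : K) * ih
  -- put everything together
  have h1 := cfVal_eq _ hden
  rw [h1, cont_append, Hcont n]
  obtain ⟨hA2, hC2⟩ := Hl2 n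
  have hct : cont (t :: List.ofFn fun i : Fin n => -a (n - (i : ℕ)))
      = (t * ((-1) ^ n * q n) + -((-1) ^ n * q ((n : ℤ) - 1)),
         t * (cont (List.ofFn fun i : Fin n => -a (n - (i : ℕ)))).2.1
           + (cont (List.ofFn fun i : Fin n => -a (n - (i : ℕ)))).2.2.2,
         (-1) ^ n * q n,
         (cont (List.ofFn fun i : Fin n => -a (n - (i : ℕ)))).2.1) := by
    rw [show cont (t :: List.ofFn fun i : Fin n => -a (n - (i : ℕ)))
        = (t * (cont (List.ofFn fun i : Fin n => -a (n - (i : ℕ)))).1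
            + (cont (List.ofFn fun i : Fin n => -a (n - (i : ℕ)))).2.2.1,
           t * (cont (List.ofFn fun i : Fin n => -a (n - (i : ℕ)))).2.1
            + (cont (List.ofFn fun i : Fin n => -a (n - (i : ℕ)))).2.2.2,
           (cont (List.ofFn fun i : Fin n => -a (n - (i : ℕ)))).1,
           (cont (List.ofFn fun i : Fin n => -a (n - (i : ℕ)))).2.1) from rfl,
       hA2, hC2]
  rw [hct]
  simp only [cmul]
  have hdet := Hdet n
  have he : ((-1 : K)) ^ n ≠ 0 := pow_ne_zero _ (by norm_num)
  set P := p (n : ℤ) with hPd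
  set P' := p ((n : ℤ) - 1) with hP'd
  set Q := q (n : ℤ) with hQd
  set Q' := q ((n : ℤ) - 1) with hQ'd
  set E := ((-1 : K)) ^ n with hEd
  have hdet' : P * Q' - P' * Q = -E := by
    rw [hdet, hEd, pow_succ]; ring
  rw [show P * (t * (E * Q) + -(E * Q')) + P' * (E * Q) = E * (P * t * Q + E) from by
        linear_combination (-E) * hdet',
      show Q * (t * (E * Q) + -(E * Q')) + Q' * (E * Q) = E * (t * Q ^ 2) from by ring,
      mul_div_mul_left _ _ he]
  have htq : t * Q ^ 2 ≠ 0 := mul_ne_zero ht (pow_ne_zero _ hqn)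
  field_simp
end

section
/- Let f be the formal power series satisfying f(q) = q + f(q^k) with f(0)=0 (so f = Σ_{n≥0} q^{k^n}) and g(q) = 1/(1−αq) where α ∈ ℂ is nonzero and not a root of unity. Then the Hadamard product f ⋆ g (termwise product of coefficients) does not satisfy any nontrivial k-Mahler equation: there are no polynomials A, A_0, …, A_d ∈ ℂ[q], not all A_i zero, with A(q) + Σ_{i=0}^d A_i(q)·(f⋆g)(q^{k^i}) = 0. -/
/-- Hadamard product (termwise product of coefficients) of power series. -/
noncomputable def hadamard (f g : PowerSeries ℂ) : PowerSeries ℂ :=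
  PowerSeries.mk fun n => PowerSeries.coeff n f * PowerSeries.coeff n g

open PowerSeries Finset
open scoped Classical

lemma coeff_g_aux (α : ℂ) (g : PowerSeries ℂ)
    (hg : (1 - PowerSeries.C α * PowerSeries.X) * g = 1) :
    ∀ n, PowerSeries.coeff n g = α ^ n := by
  have hgen : ∀ n, PowerSeries.coeff n ((1 - PowerSeries.C α * PowerSeries.X) * g)
      = PowerSeries.coeff n 1 := fun n => by rw [hg]
  intro n
  induction n with
  | zero =>
    have h0 := hgen 0
    simp only [sub_mul, one_mul, map_sub, mul_assoc, PowerSeries.coeff_zero_eq_constantCoeff,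
      map_mul, map_one] at h0
    simpa using h0
  | succ n ih =>
    have h1 := hgen (n + 1)
    rw [sub_mul, one_mul, map_sub, mul_assoc, PowerSeries.coeff_C_mul,
      PowerSeries.coeff_succ_X_mul, ih] at h1
    have : PowerSeries.coeff (n + 1) (1 : PowerSeries ℂ) = 0 := by
      simp [PowerSeries.coeff_one]
    rw [this, sub_eq_zero] at h1
    rw [h1, pow_succ]
    ring

lemma coeff_f_aux (k : ℕ) (hk : 2 ≤ k) (f : PowerSeries ℂ)
    (hf0 : PowerSeries.constantCoeff f = 0)
    (hf : f = PowerSeries.X + psub k f) :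
    ∀ n, PowerSeries.coeff n f = if ∃ m, n = k ^ m then 1 else 0 := by
  intro n
  induction n using Nat.strong_induction_on with
  | _ n ih =>
    rcases Nat.eq_zero_or_pos n with rfl | hn
    · have hne : ¬∃ m, (0:ℕ) = k ^ m := by
        rintro ⟨m, hm⟩
        exact absurd hm.symm (Nat.pow_pos (show 0 < k by omega)).ne'
      rw [if_neg hne]
      simpa using hf0
    · have hco : PowerSeries.coeff n f
          = PowerSeries.coeff n PowerSeries.X
            + (if k ∣ n then PowerSeries.coeff (n / k) f else 0) := by
        conv_lhs => rw [hf]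
        rw [map_add]
        congr 1
        simp [psub, PowerSeries.coeff_mk]
      by_cases hdvd : k ∣ n
      · have hn2 : 2 ≤ n := le_trans hk (Nat.le_of_dvd hn hdvd)
        have hlt : n / k < n := Nat.div_lt_self hn (by omega)
        rw [hco, if_pos hdvd, ih _ hlt, PowerSeries.coeff_X, if_neg (by omega)]
        rw [zero_add]
        by_cases hex : ∃ m, n / k = k ^ m
        · obtain ⟨m, hm⟩ := hex
          have hnk : n = k ^ (m + 1) := by
            rw [pow_succ, ← hm]
            exact (Nat.div_mul_cancel hdvd).symm
          rw [if_pos ⟨m, hm⟩, if_pos ⟨m + 1, hnk⟩]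
        · rw [if_neg hex, if_neg]
          rintro ⟨m, rfl⟩
          rcases Nat.eq_zero_or_pos m with rfl | hm
          · simp at hn2
          · refine hex ⟨m - 1, ?_⟩
            have hstep : k ^ m = k * k ^ (m - 1) := by
              rw [← pow_succ']; congr 1; omega
            rw [hstep, Nat.mul_div_cancel_left _ (by omega)]
      · rw [hco, if_neg hdvd, add_zero, PowerSeries.coeff_X]
        by_cases h1 : n = 1
        · rw [if_pos h1, if_pos ⟨0, by simpa using h1⟩]
        · rw [if_neg h1, if_neg]
          rintro ⟨m, rfl⟩
          rcases Nat.eq_zero_or_pos m with rfl | hm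
          · simp at h1
          · exact hdvd (dvd_pow_self k (by omega))

theorem stmt19 (k : ℕ) (hk : 2 ≤ k) (α : ℂ) (hα0 : α ≠ 0)
    (hαru : ∀ m : ℕ, 0 < m → α ^ m ≠ 1)
    (f g : PowerSeries ℂ)
    (hf0 : PowerSeries.constantCoeff f = 0)
    (hf : f = PowerSeries.X + psub k f)
    (hg : (1 - PowerSeries.C α * PowerSeries.X) * g = 1) :
    ¬ ∃ (d : ℕ) (A : Polynomial ℂ) (B : ℕ → Polynomial ℂ),
        (∃ i ≤ d, B i ≠ 0) ∧
        (A : PowerSeries ℂ) + ∑ i ∈ Finset.range (d + 1),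
            (B i : PowerSeries ℂ) * psub (k ^ i) (hadamard f g) = 0 := by
  rintro ⟨d, A, B, ⟨i0, hi0d, hi0⟩, heq⟩
  have hk1 : 1 ≤ k := by omega
  have hcf := coeff_f_aux k hk f hf0 hf
  have hcg := coeff_g_aux α g hg
  set H := hadamard f g with hH
  -- coefficients of H
  have hcH : ∀ n, PowerSeries.coeff n H = if ∃ m, n = k ^ m then α ^ n else 0 := by
    intro n
    rw [hH, hadamard, PowerSeries.coeff_mk, hcf n, hcg n]
    by_cases hex : ∃ m, n = k ^ m
    · rw [if_pos hex, if_pos hex, one_mul]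
    · rw [if_neg hex, if_neg hex, zero_mul]
  -- coefficient of psub (k^i) H at k^m, for i ≤ m
  have hpsA : ∀ i m : ℕ, i ≤ m →
      PowerSeries.coeff (k ^ m) (psub (k ^ i) H) = α ^ (k ^ (m - i)) := by
    intro i m him
    rw [psub, PowerSeries.coeff_mk, if_pos (pow_dvd_pow k him),
      Nat.pow_div him (by omega), hcH]
    rw [if_pos ⟨m - i, rfl⟩]
  -- coefficient of psub (k^i) H at N is 0 when N is not k^t with t ≥ i
  have hpsB : ∀ i N : ℕ, (∀ t, i ≤ t → N ≠ k ^ t) →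
      PowerSeries.coeff N (psub (k ^ i) H) = 0 := by
    intro i N hN
    rw [psub, PowerSeries.coeff_mk]
    split_ifs with hdvd
    · rw [hcH, if_neg]
      rintro ⟨s, hs⟩
      refine hN (i + s) (Nat.le_add_right _ _) ?_
      rw [pow_add, ← hs, Nat.mul_div_cancel' hdvd]
    · rfl
  -- degree bound
  set D : ℕ := max A.natDegree ((Finset.range (d + 1)).sup fun i => (B i).natDegree) with hD
  have hAD : A.natDegree ≤ D := le_max_left _ _
  have hBD : ∀ i ≤ d, (B i).natDegree ≤ D := by
    intro i hi
    have h1 : (B i).natDegree ≤ (Finset.range (d + 1)).sup fun i => (B i).natDegree :=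
      Finset.le_sup (f := fun i => (B i).natDegree) (Finset.mem_range.mpr (by omega))
    exact le_trans h1 (le_max_right _ _)
  -- main coefficient extraction
  have key : ∀ m j : ℕ, d ≤ m → 1 ≤ m → D < k ^ (m - 1) → j ≤ D →
      ∑ i ∈ Finset.range (d + 1), (B i).coeff j * α ^ (k ^ (m - i)) = 0 := by
    intro m j hdm hm1 hmD hj
    have hkm1 : 2 * k ^ (m - 1) ≤ k ^ m := by
      calc 2 * k ^ (m - 1) ≤ k * k ^ (m - 1) := Nat.mul_le_mul_right _ hk
        _ = k ^ m := by rw [← pow_succ']; congr 1; omega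
    have hNbig : D < k ^ m := lt_of_lt_of_le hmD (Nat.pow_le_pow_right (by omega) (by omega))
    set N := k ^ m + j with hN
    have hco := congrArg (PowerSeries.coeff N) heq
    rw [map_add, map_sum, map_zero] at hco
    have hA0 : PowerSeries.coeff N (A : PowerSeries ℂ) = 0 := by
      rw [Polynomial.coeff_coe]
      exact Polynomial.coeff_eq_zero_of_natDegree_lt (by omega)
    rw [hA0, zero_add] at hco
    rw [← hco]
    refine Finset.sum_congr rfl ?_
    intro i hi
    have hid : i ≤ d := by simpa [Nat.lt_succ_iff] using hi
    rw [PowerSeries.coeff_mul]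
    rw [Finset.sum_eq_single (j, k ^ m)]
    · rw [Polynomial.coeff_coe, hpsA i m (le_trans hid hdm)]
    · rintro ⟨a, b⟩ hab hne
      have habN : a + b = N := Finset.HasAntidiagonal.mem_antidiagonal.mp hab
      by_contra hterm
      have ha : a ≤ D := by
        by_contra ha'
        have : (B i).coeff a = 0 :=
          Polynomial.coeff_eq_zero_of_natDegree_lt (lt_of_le_of_lt (hBD i hid) (by omega))
        rw [Polynomial.coeff_coe, this, zero_mul] at hterm
        exact hterm rfl
      have hb : ∃ t, i ≤ t ∧ b = k ^ t := by
        by_contra hb'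
        push_neg at hb'
        rw [hpsB i b (fun t ht => hb' t ht), mul_zero] at hterm
        exact hterm rfl
      obtain ⟨t, hit, rfl⟩ := hb
      have htm : t = m := by
        by_contra htm
        rcases lt_or_gt_of_ne htm with hlt | hgt
        · have h1 : k ^ t ≤ k ^ (m - 1) := Nat.pow_le_pow_right (by omega) (by omega)
          omega
        · have h2 : k ^ m * 2 ≤ k ^ t := by
            calc k ^ m * 2 ≤ k ^ m * k := Nat.mul_le_mul_left _ hk
              _ = k ^ (m + 1) := (pow_succ k m).symm
              _ ≤ k ^ t := Nat.pow_le_pow_right (by omega) (by omega)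
          omega
      subst htm
      have : a = j := by omega
      exact hne (by rw [this])
    · intro hmem
      exact absurd (Finset.HasAntidiagonal.mem_antidiagonal.mpr (by omega)) hmem
  -- each coefficient of each B i vanishes
  have hBcoeff : ∀ i ≤ d, ∀ j ≤ D, (B i).coeff j = 0 := by
    intro i hid j hj
    set Q : Polynomial ℂ := ∑ i ∈ Finset.range (d + 1),
      Polynomial.C ((B i).coeff j) * Polynomial.X ^ (k ^ (d - i)) with hQ
    have hQroot : ∀ t : ℕ, Q.IsRoot (α ^ (k ^ (t + D + 2))) := by
      intro t
      set m := t + D + d + 2 with hm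
      have hcond : D < k ^ (m - 1) := by
        calc D < 2 ^ D := Nat.lt_two_pow_self
          _ ≤ 2 ^ (m - 1) := Nat.pow_le_pow_right (by omega) (by omega)
          _ ≤ k ^ (m - 1) := Nat.pow_le_pow_left hk _
      have hkey := key m j (by omega) (by omega) hcond hj
      have heval : Q.eval (α ^ (k ^ (t + D + 2)))
          = ∑ i ∈ Finset.range (d + 1), (B i).coeff j * α ^ (k ^ (m - i)) := by
        rw [hQ, Polynomial.eval_finset_sum]
        refine Finset.sum_congr rfl ?_
        intro i hi
        have hid' : i ≤ d := by simpa [Nat.lt_succ_iff] using hi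
        have hexp : k ^ (t + D + 2) * k ^ (d - i) = k ^ (m - i) := by
          rw [← pow_add]
          congr 1
          omega
        rw [Polynomial.eval_mul, Polynomial.eval_C, Polynomial.eval_pow, Polynomial.eval_X,
          ← pow_mul, hexp]
      exact heval.trans hkey
    have hQ0 : Q = 0 := by
      apply Polynomial.eq_zero_of_infinite_isRoot
      apply Set.infinite_of_injective_forall_mem
        (f := fun t : ℕ => α ^ (k ^ (t + D + 2)))
      · intro s t hst
        simp only at hst
        by_contra hne
        wlog hlt : s < t generalizing s t
        · exact this hst.symm (Ne.symm hne) (by omega)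
        have hks : k ^ (s + D + 2) < k ^ (t + D + 2) :=
          Nat.pow_lt_pow_right (by omega) (by omega)
        have : α ^ (k ^ (t + D + 2) - k ^ (s + D + 2)) = 1 := by
          have h1 : α ^ (k ^ (s + D + 2)) ≠ 0 := pow_ne_zero _ hα0
          have h2 : α ^ (k ^ (s + D + 2)) * α ^ (k ^ (t + D + 2) - k ^ (s + D + 2))
              = α ^ (k ^ (t + D + 2)) := by
            rw [← pow_add]
            congr 1
            omega
          rw [← hst] at h2
          field_simp at h2
          exact h2
        exact hαru _ (by omega) this
      · exact fun t => hQroot t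
    have hcoe : Q.coeff (k ^ (d - i)) = (B i).coeff j := by
      rw [hQ, Polynomial.finset_sum_coeff]
      rw [Finset.sum_eq_single i]
      · rw [Polynomial.coeff_C_mul, Polynomial.coeff_X_pow, if_pos rfl, mul_one]
      · intro i' hi' hne
        rw [Polynomial.coeff_C_mul, Polynomial.coeff_X_pow, if_neg, mul_zero]
        intro hpow
        have hi'd : i' ≤ d := by simpa [Nat.lt_succ_iff] using hi'
        have := Nat.pow_right_injective hk hpow
        omega
      · intro hmem
        exact absurd (Finset.mem_range.mpr (by omega)) hmem
    rw [← hcoe, hQ0, Polynomial.coeff_zero]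
  -- conclude
  apply hi0
  ext j
  rw [Polynomial.coeff_zero]
  by_cases hj : j ≤ D
  · exact hBcoeff i0 hi0d j hj
  · exact Polynomial.coeff_eq_zero_of_natDegree_lt (lt_of_le_of_lt (hBD i0 hi0d) (by omega))
end
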